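/- In E_n^B (n ≥ 2), for 1 ≤ k ≤ n and 1 ≤ j ≤ n-1 (whenever the indices occurring make sense) the following hold: (i) 𝕋̄^-_{n,k} T_j = T_j 𝕋̄^-_{n,k} if j < k-1; 𝕋̄^-_{n,k} T_{k-1} = 𝕋̄^-_{n,k-1} + (u - u^{-1}) 𝕋̄^-_{n,k} E_{k-1}; 𝕋̄^-_{n,k} T_k = 𝕋̄^-_{n,k+1}; 𝕋̄^-_{n,k} T_j = T_{j-1} 𝕋̄^-_{n,k} if j > k. (ii) 𝕋̄^+_{n,k} T_j = T_j 𝕋̄^+_{n,k} if j < k-1; 𝕋̄^+_{n,k} T_{k-1} = 𝕋̄^+_{n,k-1}; 𝕋̄^+_{n,k} T_k = 𝕋̄^+_{n,k+1} + (u - u^{-1}) 𝕋̄^+_{n,k} E_k; 𝕋̄^+_{n,k} T_j = T_{j-1} 𝕋̄^+_{n,k} if j > k. (iii) 𝕋̄^-_{n,1} B_1 = 𝕋̄^+_{n,1} + (v - v^{-1}) 𝕋̄^-_{n,1} F_1, and 𝕋̄^-_{n,k} B_1 = B_1 𝕋̄^-_{n,k} for k ≠ 1. (iv) 𝕋̄^+_{n,1}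 B_1 = 𝕋̄^-_{n,1}, and 𝕋̄^+_{n,k} B_1 = B_1 𝕋̄^+_{n,k} for k ≠ 1. -/

import Mathlib

/-!
Written out as products of generators, each identity is a local computation: far commutation
moves `T_j` past the factors it does not meet, the braid relation
`T_j T_{j-1} T_j = T_{j-1} T_j T_{j-1}` produces the shift `T_j ↦ T_{j-1}` for `j > k`, and the
terms with `E_j` and `F_1` come from the quadratic relations of `T_j` and `B_1`. The one
non-local input is that `B̄_k` commutes with `B_1` and with `T_j` for `j ≤ k - 2`. For the
latter it suffices to take `k = j + 2`: in `B̄_{j+2} = T_{j+1} T_j B̄_j T_j T_{j+1}` the middle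
factor `B̄_j` commutes with `T_{j+1}`, and two braid moves carry `T_j` across. For the former,
`B_1` commutes with `B̄_2 = T_1 B_1 T_1` by the relation `B_1 T_1 B_1 T_1 = T_1 B_1 T_1 B_1`.
-/

noncomputable section

open scoped Classical

/-- Generators of the bt-algebra of type B (0-indexed: `T i` is the paper's
`T_{i+1}`, `E i` is `E_{i+1}`, `F j` is `F_{j+1}`). -/
inductive BtGen (n : ℕ) : Type
  | B1 : 0 < n → BtGen n
  | T : Fin (n - 1) → BtGen n
  | E : Fin (n - 1) → BtGen n
  | F : Fin n → BtGen n

namespace Bt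

variable (R : Type) [Field R] (u v : R) (n : ℕ)

/-- Shorthand for the canonical image of a generator in the free algebra. -/
def g (x : BtGen n) : FreeAlgebra R (BtGen n) := FreeAlgebra.ι R x

/-- The defining relations of the bt-algebra of type B. -/
inductive Rel : FreeAlgebra R (BtGen n) → FreeAlgebra R (BtGen n) → Prop
  | tt_far (i j : Fin (n - 1)) (h : (i : ℕ) + 1 < (j : ℕ)) :
      Rel (g R n (.T i) * g R n (.T j)) (g R n (.T j) * g R n (.T i))
  | braid (i j : Fin (n - 1)) (h : (j : ℕ) = (i : ℕ) + 1) :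
      Rel (g R n (.T i) * g R n (.T j) * g R n (.T i))
          (g R n (.T j) * g R n (.T i) * g R n (.T j))
  | quadT (i : Fin (n - 1)) :
      Rel (g R n (.T i) * g R n (.T i))
          (1 + algebraMap R _ (u - u⁻¹) * (g R n (.E i) * g R n (.T i)))
  | idemE (i : Fin (n - 1)) : Rel (g R n (.E i) * g R n (.E i)) (g R n (.E i))
  | commEE (i j : Fin (n - 1)) :
      Rel (g R n (.E i) * g R n (.E j)) (g R n (.E j) * g R n (.E i))
  | commET (i : Fin (n - 1)) :
      Rel (g R n (.E i) * g R n (.T i)) (g R n (.T i) * g R n (.E i))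
  | commET_far (i j : Fin (n - 1)) (h : (i : ℕ) + 1 < (j : ℕ) ∨ (j : ℕ) + 1 < (i : ℕ)) :
      Rel (g R n (.E i) * g R n (.T j)) (g R n (.T j) * g R n (.E i))
  | eet (i j : Fin (n - 1)) (h : (j : ℕ) = (i : ℕ) + 1 ∨ (i : ℕ) = (j : ℕ) + 1) :
      Rel (g R n (.E i) * g R n (.E j) * g R n (.T i))
          (g R n (.T i) * (g R n (.E i) * g R n (.E j)))
  | ete (i j : Fin (n - 1)) (h : (j : ℕ) = (i : ℕ) + 1 ∨ (i : ℕ) = (j : ℕ) + 1) :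
      Rel (g R n (.E j) * g R n (.T i) * g R n (.E j))
          (g R n (.T i) * (g R n (.E i) * g R n (.E j)))
  | ett (i j : Fin (n - 1)) (h : (j : ℕ) = (i : ℕ) + 1 ∨ (i : ℕ) = (j : ℕ) + 1) :
      Rel (g R n (.E i) * g R n (.T j) * g R n (.T i))
          (g R n (.T j) * g R n (.T i) * g R n (.E j))
  | bquad (h : 0 < n) (i : Fin (n - 1)) (hi : (i : ℕ) = 0) :
      Rel (g R n (.B1 h) * g R n (.T i) * g R n (.B1 h) * g R n (.T i))
          (g R n (.T i) * g R n (.B1 h) * g R n (.T i) * g R n (.B1 h))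
  | commBT (h : 0 < n) (i : Fin (n - 1)) (hi : 0 < (i : ℕ)) :
      Rel (g R n (.B1 h) * g R n (.T i)) (g R n (.T i) * g R n (.B1 h))
  | quadB (h : 0 < n) (j : Fin n) (hj : (j : ℕ) = 0) :
      Rel (g R n (.B1 h) * g R n (.B1 h))
          (1 + algebraMap R _ (v - v⁻¹) * (g R n (.F j) * g R n (.B1 h)))
  | commBE (h : 0 < n) (i : Fin (n - 1)) :
      Rel (g R n (.B1 h) * g R n (.E i)) (g R n (.E i) * g R n (.B1 h))
  | idemF (j : Fin n) : Rel (g R n (.F j) * g R n (.F j)) (g R n (.F j))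
  | commBF (h : 0 < n) (j : Fin n) :
      Rel (g R n (.B1 h) * g R n (.F j)) (g R n (.F j) * g R n (.B1 h))
  | commFE (j : Fin n) (i : Fin (n - 1)) :
      Rel (g R n (.F j) * g R n (.E i)) (g R n (.E i) * g R n (.F j))
  | ftEq (i : Fin (n - 1)) (j k : Fin n) (hj : (j : ℕ) = (i : ℕ)) (hk : (k : ℕ) = (i : ℕ) + 1) :
      Rel (g R n (.F j) * g R n (.T i)) (g R n (.T i) * g R n (.F k))
  | ftEq' (i : Fin (n - 1)) (j k : Fin n) (hj : (j : ℕ) = (i : ℕ) + 1) (hk : (k : ℕ) = (i : ℕ)) :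
      Rel (g R n (.F j) * g R n (.T i)) (g R n (.T i) * g R n (.F k))
  | ftNe (i : Fin (n - 1)) (j : Fin n) (hj : (j : ℕ) ≠ (i : ℕ) ∧ (j : ℕ) ≠ (i : ℕ) + 1) :
      Rel (g R n (.F j) * g R n (.T i)) (g R n (.T i) * g R n (.F j))
  | eff (i : Fin (n - 1)) (j k : Fin n) (hj : (j : ℕ) = (i : ℕ)) (hk : (k : ℕ) = (i : ℕ) + 1) :
      Rel (g R n (.E i) * g R n (.F j)) (g R n (.F j) * g R n (.F k))
  | eff' (i : Fin (n - 1)) (j k : Fin n) (hj : (j : ℕ) = (i : ℕ)) (hk : (k : ℕ) = (i : ℕ) + 1) :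
      Rel (g R n (.E i) * g R n (.F k)) (g R n (.F j) * g R n (.F k))

/-- The bt-algebra of type B, presented by generators and relations. -/
abbrev EB := RingQuot (Rel R u v n)

/-- The image of a generator in the bt-algebra of type B. -/
def gen (x : BtGen n) : EB R u v n := RingQuot.mkAlgHom R (Rel R u v n) (g R n x)

/-- `tW i` is the paper's braiding generator `T_{i+1}` (out of range: `1`). -/
def tW (i : ℕ) : EB R u v n := if h : i < n - 1 then gen R u v n (.T ⟨i, h⟩) else 1

/-- `eW i` is the paper's tie generator `E_{i+1}` (out of range: `1`). -/
def eW (i : ℕ) : EB R u v n := if h : i < n - 1 then gen R u v n (.E ⟨i, h⟩) else 1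

/-- `fW j` is the paper's framing generator `F_{j+1}` (out of range: `1`). -/
def fW (j : ℕ) : EB R u v n := if h : j < n then gen R u v n (.F ⟨j, h⟩) else 1

/-- The loop generator `B_1`. -/
def bW : EB R u v n := if h : 0 < n then gen R u v n (.B1 h) else 1

/-- The inverse of the braiding generator: `T_i⁻¹ = T_i - (u - u⁻¹) E_i` (0-indexed). -/
def tInv (i : ℕ) : EB R u v n := tW R u v n i - algebraMap R _ (u - u⁻¹) * eW R u v n i

/-- The element `E_{i,j}` of the paper, for 0-indexed `a = i - 1`, `b = j - 1` with `a < b`: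
`E_{i,j} = T_i ⋯ T_{j-2} E_{j-1} T_{j-2}⁻¹ ⋯ T_i⁻¹` (and `E_i` when `j = i+1`). -/
def Epair (a b : ℕ) : EB R u v n :=
  ((List.range (b - a - 1)).map fun k => tW R u v n (a + k)).prod * eW R u v n (b - 1) *
    (((List.range (b - a - 1)).reverse).map fun k => tInv R u v n (a + k)).prod

/-- All pairs of elements of `Fin m` in lexicographic order. -/
def pairList (m : ℕ) : List (Fin m × Fin m) :=
  (List.finRange m).flatMap fun a => (List.finRange m).map fun b => (a, b)

/-- `B_k = T_{k-1} ⋯ T_1 B_1 T_1⁻¹ ⋯ T_{k-1}⁻¹`, paper-indexed (`1 ≤ k ≤ n`). -/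
def bK (k : ℕ) : EB R u v n :=
  (((List.range (k - 1)).reverse).map fun a => tW R u v n a).prod * bW R u v n *
    ((List.range (k - 1)).map fun a => tInv R u v n a).prod

/-- `B̄_k = T_{k-1} ⋯ T_1 B_1 T_1 ⋯ T_{k-1}`, paper-indexed. -/
def bBar (k : ℕ) : EB R u v n :=
  (((List.range (k - 1)).reverse).map fun a => tW R u v n a).prod * bW R u v n *
    ((List.range (k - 1)).map fun a => tW R u v n a).prod

/-- `𝕋⁺_{k,j} = T_{k-1} ⋯ T_j` (and `1` for `j = k`), paper-indexed. -/
def Tp (k j : ℕ) : EB R u v n :=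
  (((List.range (k - j)).reverse).map fun a => tW R u v n (j - 1 + a)).prod

/-- `𝕋⁻_{k,j} = T_{k-1} ⋯ T_j B_j` (and `B_k` for `j = k`), paper-indexed. -/
def Tm (k j : ℕ) : EB R u v n := Tp R u v n k j * bK R u v n j

/-- `𝕋̄⁻_{k,j} = T_{k-1} ⋯ T_j B̄_j` (and `B̄_k` for `j = k`), paper-indexed. -/
def TmBar (k j : ℕ) : EB R u v n := Tp R u v n k j * bBar R u v n j

/-- The product `T_{w_1} ⋯ T_{w_m}` associated to a word in the letters
`{r_1, s_1, …, s_{n-1}}` (letter `0` is `r_1 ↦ B_1`, letter `k ≥ 1` is `s_k ↦ T_k`). -/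
def wordAlg (l : List (Fin n)) : EB R u v n :=
  (l.map fun i => if (i : ℕ) = 0 then bW R u v n else tW R u v n ((i : ℕ) - 1)).prod

end Bt
/-- The field `K = ℂ(u, v)` of rational functions in two indeterminates over `ℂ`. -/
abbrev Kfield : Type := FractionRing (MvPolynomial (Fin 2) ℂ)

/-- The indeterminate `u` of `K = ℂ(u, v)`. -/
def uK : Kfield := algebraMap (MvPolynomial (Fin 2) ℂ) Kfield (MvPolynomial.X 0)

/-- The indeterminate `v` of `K = ℂ(u, v)`. -/
def vK : Kfield := algebraMap (MvPolynomial (Fin 2) ℂ) Kfield (MvPolynomial.X 1)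

section BraidMonoid

variable {M : Type*} [Monoid M]

theorem Commute.conj_braid {s t c : M} (hbr : s * t * s = t * s * t) (hc : Commute t c) :
    Commute s (t * (s * c * s) * t) := by
  have hst : ∀ x : M, s * (t * (s * x)) = t * (s * (t * x)) := fun x => by
    simp only [← mul_assoc, hbr]
  have hts : t * (s * t) = s * (t * s) := by simp only [← mul_assoc, hbr]
  show s * _ = _ * s
  calc s * (t * (s * c * s) * t) = t * (s * (t * (c * (s * t)))) := by
        simp only [mul_assoc, hst]
    _ = t * (s * (c * (t * (s * t)))) := by rw [hc.left_comm]
    _ = t * (s * c * s) * t * s := by simp only [hts, mul_assoc]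

end BraidMonoid

namespace Bt

variable {R : Type} [Field R] {u v : R} {n : ℕ}

theorem commute_tW_tW {a b : ℕ} (h : a + 2 ≤ b) : Commute (tW R u v n a) (tW R u v n b) := by
  unfold tW
  split_ifs with ha hb
  · simpa [Commute, SemiconjBy, gen] using RingQuot.mkAlgHom_rel R
      (Rel.tt_far (u := u) (v := v) ⟨a, ha⟩ ⟨b, hb⟩ (by simp only; omega))
  all_goals simp

theorem tW_braid {a : ℕ} (h : a + 2 < n) :
    tW R u v n a * tW R u v n (a + 1) * tW R u v n a
      = tW R u v n (a + 1) * tW R u v n a * tW R u v n (a + 1) := by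
  unfold tW
  rw [dif_pos (by omega), dif_pos (by omega)]
  simpa [gen] using RingQuot.mkAlgHom_rel R
    (Rel.braid (u := u) (v := v) ⟨a, by omega⟩ ⟨a + 1, by omega⟩ rfl)

theorem tW_mul_self {a : ℕ} (h : a + 1 < n) :
    tW R u v n a * tW R u v n a = 1 + (u - u⁻¹) • (eW R u v n a * tW R u v n a) := by
  unfold tW eW
  simp only [dif_pos (show a < n - 1 by omega)]
  simpa [gen, Algebra.smul_def] using RingQuot.mkAlgHom_rel R
    (Rel.quadT (u := u) (v := v) ⟨a, by omega⟩)

theorem commute_eW_tW (a : ℕ) : Commute (eW R u v n a) (tW R u v n a) := by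
  unfold tW eW
  split_ifs with ha
  · simpa [Commute, SemiconjBy, gen] using RingQuot.mkAlgHom_rel R
      (Rel.commET (u := u) (v := v) ⟨a, ha⟩)
  · simp

theorem commute_bW_tW {a : ℕ} (h : 1 ≤ a) : Commute (bW R u v n) (tW R u v n a) := by
  unfold bW tW
  split_ifs with hn ha
  · simpa [Commute, SemiconjBy, gen] using RingQuot.mkAlgHom_rel R
      (Rel.commBT (u := u) (v := v) hn ⟨a, ha⟩ (by simp only; omega))
  all_goals simp

theorem bW_tW_bW_tW :
    bW R u v n * tW R u v n 0 * bW R u v n * tW R u v n 0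
      = tW R u v n 0 * bW R u v n * tW R u v n 0 * bW R u v n := by
  unfold bW tW
  split_ifs with hn h0
  · simpa [gen] using RingQuot.mkAlgHom_rel R (Rel.bquad (u := u) (v := v) hn ⟨0, h0⟩ rfl)
  all_goals simp

theorem bW_mul_self (h : 0 < n) :
    bW R u v n * bW R u v n = 1 + (v - v⁻¹) • (fW R u v n 0 * bW R u v n) := by
  unfold bW fW
  simp only [dif_pos h]
  simpa [gen, Algebra.smul_def] using RingQuot.mkAlgHom_rel R
    (Rel.quadB (u := u) (v := v) h ⟨0, h⟩ rfl)

theorem commute_bW_fW (j : ℕ) : Commute (bW R u v n) (fW R u v n j) := by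
  unfold bW fW
  split_ifs with hn hj
  · simpa [Commute, SemiconjBy, gen] using RingQuot.mkAlgHom_rel R
      (Rel.commBF (u := u) (v := v) hn ⟨j, hj⟩)
  all_goals simp

theorem Tp_mul_Tp {m j k : ℕ} (hk : 1 ≤ k) (hkj : k ≤ j) (hjm : j ≤ m) :
    Tp R u v n m j * Tp R u v n j k = Tp R u v n m k := by
  obtain ⟨d, rfl⟩ : ∃ d, j = k + d := ⟨j - k, by omega⟩
  obtain ⟨e, rfl⟩ : ∃ e, m = k + d + e := ⟨m - (k + d), by omega⟩
  simp only [Tp, show k + d + e - k = d + e by omega, show k + d + e - (k + d) = e by omega,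
    show k + d - k = d by omega, List.range_add, List.reverse_append, List.map_append,
    List.prod_append, List.map_reverse, List.map_map]
  congr 4
  funext a
  simp only [Function.comp_apply]
  congr 1
  omega

theorem Tp_succ {m a : ℕ} (h : a + 2 ≤ m) :
    Tp R u v n m (a + 1) = Tp R u v n m (a + 2) * tW R u v n a := by
  rw [← Tp_mul_Tp (j := a + 2) (by omega) (by omega) h]
  simp [Tp]

theorem commute_tW_Tp_of_add_three_le {m k b : ℕ} (h : b + 3 ≤ k) :
    Commute (tW R u v n b) (Tp R u v n m k) := by
  refine Commute.list_prod_right _ _ fun x hx => ?_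
  obtain ⟨a, -, rfl⟩ := List.mem_map.1 hx
  exact commute_tW_tW (by omega)

theorem commute_tW_Tp_of_le {m k b : ℕ} (hk : 1 ≤ k) (h : m ≤ b) :
    Commute (tW R u v n b) (Tp R u v n m k) := by
  refine Commute.list_prod_right _ _ fun x hx => ?_
  obtain ⟨a, ha, rfl⟩ := List.mem_map.1 hx
  simp only [List.mem_reverse, List.mem_range] at ha
  exact (commute_tW_tW (by omega)).symm

theorem commute_bW_Tp {m k : ℕ} (h : 2 ≤ k) : Commute (bW R u v n) (Tp R u v n m k) := by
  refine Commute.list_prod_right _ _ fun x hx => ?_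
  obtain ⟨a, -, rfl⟩ := List.mem_map.1 hx
  exact commute_bW_tW (by omega)

theorem Tp_succ_mul_tW {a : ℕ} (h : a + 2 ≤ n) :
    Tp R u v n n (a + 1) * tW R u v n a
      = Tp R u v n n (a + 2) + (u - u⁻¹) • (Tp R u v n n (a + 1) * eW R u v n a) := by
  rw [Tp_succ h, mul_assoc, tW_mul_self (by omega), mul_add, mul_one, mul_smul_comm,
    (commute_eW_tW a).eq, ← mul_assoc]

theorem Tp_mul_tW_of_le {k c : ℕ} (hk : 1 ≤ k) (hkc : k ≤ c) (hc : c + 2 ≤ n) :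
    Tp R u v n n k * tW R u v n c = tW R u v n (c - 1) * Tp R u v n n k := by
  obtain ⟨d, rfl⟩ : ∃ d, c = d + 1 := ⟨c - 1, by omega⟩
  set P := Tp R u v n n (d + 3)
  set Q := Tp R u v n (d + 1) k
  have hsplit : Tp R u v n n k = P * (tW R u v n (d + 1) * tW R u v n d) * Q := by
    rw [← Tp_mul_Tp hk hkc (by omega), Tp_succ (by omega), Tp_succ (by omega)]
    simp only [mul_assoc]
    rfl
  have hQ : Commute (tW R u v n (d + 1)) Q := commute_tW_Tp_of_le hk le_rfl
  have hP : Commute (tW R u v n d) P := commute_tW_Tp_of_add_three_le le_rfl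
  rw [hsplit, Nat.add_sub_cancel]
  calc P * (tW R u v n (d + 1) * tW R u v n d) * Q * tW R u v n (d + 1)
      = P * (tW R u v n (d + 1) * tW R u v n d * tW R u v n (d + 1)) * Q := by
        simp only [mul_assoc, hQ.eq]
    _ = P * (tW R u v n d * tW R u v n (d + 1) * tW R u v n d) * Q := by
        rw [tW_braid (by omega)]
    _ = tW R u v n d * (P * (tW R u v n (d + 1) * tW R u v n d) * Q) := by
        simp only [← mul_assoc, hP.eq]

theorem bBar_one : bBar R u v n 1 = bW R u v n := by
  simp [bBar]

theorem bBar_succ (a : ℕ) :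
    bBar R u v n (a + 2) = tW R u v n a * bBar R u v n (a + 1) * tW R u v n a := by
  simp [bBar, List.range_succ, mul_assoc]

theorem commute_tW_bBar_of_le {k b : ℕ} (hb : 1 ≤ b) (h : k ≤ b) :
    Commute (tW R u v n b) (bBar R u v n k) := by
  have hlist : ∀ x ∈ (List.range (k - 1)).map (tW R u v n), Commute (tW R u v n b) x := by
    intro x hx
    obtain ⟨a, ha, rfl⟩ := List.mem_map.1 hx
    exact (commute_tW_tW (by simp only [List.mem_range] at ha; omega)).symm
  refine ((Commute.list_prod_right _ _ ?_).mul_right (commute_bW_tW hb).symm).mul_right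
    (Commute.list_prod_right _ _ hlist)
  simpa [← List.map_reverse] using hlist

theorem commute_bW_bBar (k : ℕ) : Commute (bW R u v n) (bBar R u v n k) := by
  induction k with
  | zero => simp [bBar]
  | succ k ih =>
    rcases k with _ | _ | a
    · rw [bBar_one]
    · rw [bBar_succ, bBar_one]
      simpa [Commute, SemiconjBy, mul_assoc] using bW_tW_bW_tW
    · rw [bBar_succ]
      exact ((commute_bW_tW le_add_self).mul_right ih).mul_right (commute_bW_tW le_add_self)

theorem commute_tW_bBar_of_add_three_le {b k : ℕ} (hbk : b + 3 ≤ k) (hbn : b + 3 ≤ n) :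
    Commute (tW R u v n b) (bBar R u v n k) := by
  induction k, hbk using Nat.le_induction with
  | base =>
    rw [bBar_succ, bBar_succ]
    exact Commute.conj_braid (tW_braid (by omega))
      (commute_tW_bBar_of_le le_add_self le_rfl)
  | succ k hk ih =>
    obtain ⟨a, rfl⟩ : ∃ a, k = a + 1 := ⟨k - 1, by omega⟩
    rw [bBar_succ]
    have hfar : Commute (tW R u v n b) (tW R u v n a) := commute_tW_tW (by omega)
    exact (hfar.mul_right ih).mul_right hfar

theorem TmBar_one (m : ℕ) : TmBar R u v n m 1 = Tp R u v n m 1 * bW R u v n := by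
  rw [TmBar, bBar_one]

theorem TmBar_succ_mul_tW {a : ℕ} (h : a + 2 ≤ n) :
    TmBar R u v n n (a + 1) * tW R u v n a = TmBar R u v n n (a + 2) := by
  simp only [TmBar, Tp_succ h, bBar_succ, mul_assoc]

theorem TmBar_succ_succ_mul_tW {a : ℕ} (h : a + 2 ≤ n) :
    TmBar R u v n n (a + 2) * tW R u v n a
      = TmBar R u v n n (a + 1) + (u - u⁻¹) • (TmBar R u v n n (a + 2) * eW R u v n a) := by
  simp only [TmBar, Tp_succ h, bBar_succ, mul_assoc]
  rw [tW_mul_self (by omega), ← (commute_eW_tW a).eq]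
  simp only [mul_add, mul_one, mul_smul_comm]

theorem commute_tW_TmBar_of_add_three_le {b k : ℕ} (hbk : b + 3 ≤ k) (hkn : k ≤ n) :
    Commute (tW R u v n b) (TmBar R u v n n k) :=
  (commute_tW_Tp_of_add_three_le hbk).mul_right (commute_tW_bBar_of_add_three_le hbk (by omega))

theorem TmBar_mul_tW_of_le {k c : ℕ} (hk : 1 ≤ k) (hkc : k ≤ c) (hc : c + 2 ≤ n) :
    TmBar R u v n n k * tW R u v n c = tW R u v n (c - 1) * TmBar R u v n n k := by
  rw [TmBar, mul_assoc, ← (commute_tW_bBar_of_le (by omega) hkc).eq, ← mul_assoc,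
    Tp_mul_tW_of_le hk hkc hc, mul_assoc]

theorem TmBar_one_mul_bW (h : 0 < n) :
    TmBar R u v n n 1 * bW R u v n
      = Tp R u v n n 1 + (v - v⁻¹) • (TmBar R u v n n 1 * fW R u v n 0) := by
  rw [TmBar_one, mul_assoc, bW_mul_self h, mul_add, mul_one, mul_smul_comm,
    mul_assoc _ (bW R u v n), (commute_bW_fW 0).eq]

theorem commute_bW_TmBar {m k : ℕ} (h : 2 ≤ k) : Commute (bW R u v n) (TmBar R u v n m k) :=
  (commute_bW_Tp h).mul_right (commute_bW_bBar k)

end Bt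

open Bt in
theorem btB_relaciones_bar_general (n : ℕ) :
    (∀ k j : ℕ, 1 ≤ k → k ≤ n → 1 ≤ j → j ≤ n - 1 →
      ((j < k - 1 →
          TmBar Kfield uK vK n n k * tW Kfield uK vK n (j - 1) =
            tW Kfield uK vK n (j - 1) * TmBar Kfield uK vK n n k) ∧
        (j = k - 1 →
          TmBar Kfield uK vK n n k * tW Kfield uK vK n (j - 1) =
            TmBar Kfield uK vK n n (k - 1) +
              (uK - uK⁻¹) • (TmBar Kfield uK vK n n k * eW Kfield uK vK n (j - 1))) ∧
        (j = k →
          TmBar Kfield uK vK n n k * tW Kfield uK vK n (j - 1) =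
            TmBar Kfield uK vK n n (k + 1)) ∧
        (k < j →
          TmBar Kfield uK vK n n k * tW Kfield uK vK n (j - 1) =
            tW Kfield uK vK n (j - 2) * TmBar Kfield uK vK n n k))) ∧
    (∀ k j : ℕ, 1 ≤ k → k ≤ n → 1 ≤ j → j ≤ n - 1 →
      ((j < k - 1 →
          Tp Kfield uK vK n n k * tW Kfield uK vK n (j - 1) =
            tW Kfield uK vK n (j - 1) * Tp Kfield uK vK n n k) ∧
        (j = k - 1 →
          Tp Kfield uK vK n n k * tW Kfield uK vK n (j - 1) =
            Tp Kfield uK vK n n (k - 1)) ∧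
        (j = k →
          Tp Kfield uK vK n n k * tW Kfield uK vK n (j - 1) =
            Tp Kfield uK vK n n (k + 1) +
              (uK - uK⁻¹) • (Tp Kfield uK vK n n k * eW Kfield uK vK n (j - 1))) ∧
        (k < j →
          Tp Kfield uK vK n n k * tW Kfield uK vK n (j - 1) =
            tW Kfield uK vK n (j - 2) * Tp Kfield uK vK n n k))) ∧
    (∀ k : ℕ, 1 ≤ k → k ≤ n →
      ((k = 1 →
          TmBar Kfield uK vK n n 1 * bW Kfield uK vK n =
            Tp Kfield uK vK n n 1 +
              (vK - vK⁻¹) • (TmBar Kfield uK vK n n 1 * fW Kfield uK vK n 0)) ∧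
        (k ≠ 1 →
          TmBar Kfield uK vK n n k * bW Kfield uK vK n =
            bW Kfield uK vK n * TmBar Kfield uK vK n n k))) ∧
    (∀ k : ℕ, 1 ≤ k → k ≤ n →
      ((k = 1 → Tp Kfield uK vK n n 1 * bW Kfield uK vK n = TmBar Kfield uK vK n n 1) ∧
        (k ≠ 1 →
          Tp Kfield uK vK n n k * bW Kfield uK vK n =
            bW Kfield uK vK n * Tp Kfield uK vK n n k))) := by
  refine ⟨fun k j hk hkn hj hjn => ⟨fun h => ?_, fun h => ?_, fun h => ?_, fun h => ?_⟩,
    fun k j hk hkn hj hjn => ⟨fun h => ?_, fun h => ?_, fun h => ?_, fun h => ?_⟩,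
    fun k hk hkn => ⟨fun _ => TmBar_one_mul_bW (by omega),
      fun h => (commute_bW_TmBar (by omega)).eq.symm⟩,
    fun k hk hkn => ⟨fun _ => (TmBar_one n).symm,
      fun h => (commute_bW_Tp (by omega)).eq.symm⟩⟩
  · exact (commute_tW_TmBar_of_add_three_le (by omega) hkn).eq.symm
  · obtain ⟨a, rfl, rfl⟩ : ∃ a, k = a + 2 ∧ j = a + 1 := ⟨j - 1, by omega, by omega⟩
    exact TmBar_succ_succ_mul_tW hkn
  · obtain ⟨a, rfl, rfl⟩ : ∃ a, k = a + 1 ∧ j = a + 1 := ⟨j - 1, by omega, by omega⟩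
    exact TmBar_succ_mul_tW (by omega)
  · rw [show j - 2 = j - 1 - 1 by omega]
    exact TmBar_mul_tW_of_le hk (by omega) (by omega)
  · exact (commute_tW_Tp_of_add_three_le (by omega)).eq.symm
  · obtain ⟨a, rfl, rfl⟩ : ∃ a, k = a + 2 ∧ j = a + 1 := ⟨j - 1, by omega, by omega⟩
    exact (Tp_succ hkn).symm
  · obtain ⟨a, rfl, rfl⟩ : ∃ a, k = a + 1 ∧ j = a + 1 := ⟨j - 1, by omega, by omega⟩
    exact Tp_succ_mul_tW (by omega)
  · rw [show j - 2 = j - 1 - 1 by omega]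
    exact Tp_mul_tW_of_le hk (by omega) (by omega)

open Bt in
/-- The relations of Lemma 1 (`relaciones'`) in `E_n^B`,
for the "bar" elements `𝕋̄^±_{n,k}` (paper-indexed `1 ≤ k ≤ n`, `1 ≤ j ≤ n-1`):
(i) the four commutation/recursion rules of `𝕋̄⁻_{n,k}` with `T_j`;
(ii) the four rules of `𝕋̄⁺_{n,k}` with `T_j`;
(iii)–(iv) the rules for right multiplication by `B_1`.
(`T_j = tW (j-1)`, `E_j = eW (j-1)`, `F_1 = fW 0`, `𝕋̄⁺_{n,k} = Tp n k`,
`𝕋̄⁻_{n,k} = TmBar n k`.) -/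
theorem btB_relaciones_bar (n : ℕ) (hn : 2 ≤ n) :
    (∀ k j : ℕ, 1 ≤ k → k ≤ n → 1 ≤ j → j ≤ n - 1 →
      ((j < k - 1 →
          TmBar Kfield uK vK n n k * tW Kfield uK vK n (j - 1) =
            tW Kfield uK vK n (j - 1) * TmBar Kfield uK vK n n k) ∧
        (j = k - 1 →
          TmBar Kfield uK vK n n k * tW Kfield uK vK n (j - 1) =
            TmBar Kfield uK vK n n (k - 1) +
              (uK - uK⁻¹) • (TmBar Kfield uK vK n n k * eW Kfield uK vK n (j - 1))) ∧
        (j = k →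
          TmBar Kfield uK vK n n k * tW Kfield uK vK n (j - 1) =
            TmBar Kfield uK vK n n (k + 1)) ∧
        (k < j →
          TmBar Kfield uK vK n n k * tW Kfield uK vK n (j - 1) =
            tW Kfield uK vK n (j - 2) * TmBar Kfield uK vK n n k))) ∧
    (∀ k j : ℕ, 1 ≤ k → k ≤ n → 1 ≤ j → j ≤ n - 1 →
      ((j < k - 1 →
          Tp Kfield uK vK n n k * tW Kfield uK vK n (j - 1) =
            tW Kfield uK vK n (j - 1) * Tp Kfield uK vK n n k) ∧
        (j = k - 1 →
          Tp Kfield uK vK n n k * tW Kfield uK vK n (j - 1) =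
            Tp Kfield uK vK n n (k - 1)) ∧
        (j = k →
          Tp Kfield uK vK n n k * tW Kfield uK vK n (j - 1) =
            Tp Kfield uK vK n n (k + 1) +
              (uK - uK⁻¹) • (Tp Kfield uK vK n n k * eW Kfield uK vK n (j - 1))) ∧
        (k < j →
          Tp Kfield uK vK n n k * tW Kfield uK vK n (j - 1) =
            tW Kfield uK vK n (j - 2) * Tp Kfield uK vK n n k))) ∧
    (∀ k : ℕ, 1 ≤ k → k ≤ n →
      ((k = 1 →
          TmBar Kfield uK vK n n 1 * bW Kfield uK vK n =
            Tp Kfield uK vK n n 1 +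
              (vK - vK⁻¹) • (TmBar Kfield uK vK n n 1 * fW Kfield uK vK n 0)) ∧
        (k ≠ 1 →
          TmBar Kfield uK vK n n k * bW Kfield uK vK n =
            bW Kfield uK vK n * TmBar Kfield uK vK n n k))) ∧
    (∀ k : ℕ, 1 ≤ k → k ≤ n →
      ((k = 1 → Tp Kfield uK vK n n 1 * bW Kfield uK vK n = TmBar Kfield uK vK n n 1) ∧
        (k ≠ 1 →
          Tp Kfield uK vK n n k * bW Kfield uK vK n =
            bW Kfield uK vK n * Tp Kfield uK vK n n k))) :=
  btB_relaciones_bar_general n
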